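/- Let E be a finite-dimensional real inner product space, (Ω, 𝓕, μ) a probability space with a sub-σ-algebra 𝓖 ⊆ 𝓕, L > 0, σ ≥ 0, δ ≥ 0, and η > 0. Let f, f' : E → ℝ with f L-smooth and |f'(x) − f(x)| ≤ δ for all x ∈ E. Let θ, g : Ω → E be such that θ is strongly 𝓖-measurable, g is square-integrable, f ∘ θ is integrable, ω ↦ f'(θ(ω) − η·g(ω)) is integrable, μ[g | 𝓖] = ∇f(θ) almost everywhere, and μ[‖g − ∇f(θ)‖² | 𝓖] ≤ σ² almost everywhere. Then E[f'(θ − η·g)] ≤ E[f(θ)] − η·(1 − L·η)·E[‖∇f(θ)‖²] + L·η²·σ² + δ. -/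

import Mathlib

/-!
By the descent lemma and the drift bound, `f' (θ - η • g) ≤ f θ - η ⟪∇f θ, g⟫ + (L / 2) η² ‖g‖² + δ`
pointwise. In expectation, unbiasedness turns `E ⟪∇f θ, g⟫` into `E ‖∇f θ‖²` (the conditional
expectation is an orthogonal projection in `L²`), and the same orthogonality gives
`E ‖g‖² = E ‖g - ∇f θ‖² + E ‖∇f θ‖² ≤ σ² + E ‖∇f θ‖²`.
-/

open MeasureTheory Set
open scoped RealInnerProductSpace

section Descent

variable {E : Type*} [NormedAddCommGroup E] [InnerProductSpace ℝ E] [CompleteSpace E]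

theorem Differentiable.le_add_inner_gradient_add_sq {f : E → ℝ} {L : ℝ}
    (hf : Differentiable ℝ f) (hlip : ∀ x y, ‖gradient f x - gradient f y‖ ≤ L * ‖x - y‖)
    (x v : E) : f (x + v) ≤ f x + ⟪gradient f x, v⟫ + L / 2 * ‖v‖ ^ 2 := by
  let φ : ℝ → ℝ := fun t => f (x + t • v) - t * ⟪gradient f x, v⟫ - L / 2 * t ^ 2 * ‖v‖ ^ 2
  have hφ : ∀ t, HasDerivAt φ (⟪gradient f (x + t • v) - gradient f x, v⟫ - L * t * ‖v‖ ^ 2) t := by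
    intro t
    have hline : HasDerivAt (fun t : ℝ => x + t • v) v t := by
      simpa using ((hasDerivAt_id t).smul_const v).const_add x
    have hcomp := (hf (x + t • v)).hasGradientAt.hasFDerivAt.comp_hasDerivAt t hline
    refine ((hcomp.sub ((hasDerivAt_id t).mul_const ⟪gradient f x, v⟫)).sub
      (((hasDerivAt_pow 2 t).const_mul (L / 2)).mul_const (‖v‖ ^ 2))).congr_deriv ?_
    rw [InnerProductSpace.toDual_apply_apply, inner_sub_left]
    push_cast
    ring
  have hφ_nonpos : ∀ t ∈ interior (Icc (0 : ℝ) 1),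
      ⟪gradient f (x + t • v) - gradient f x, v⟫ - L * t * ‖v‖ ^ 2 ≤ 0 := by
    intro t ht
    rw [interior_Icc] at ht
    have hgrad : ‖gradient f (x + t • v) - gradient f x‖ ≤ L * t * ‖v‖ := by
      simpa [norm_smul, abs_of_pos ht.1, mul_assoc] using hlip (x + t • v) x
    nlinarith [real_inner_le_norm (gradient f (x + t • v) - gradient f x) v, norm_nonneg v]
  have hanti : AntitoneOn φ (Icc 0 1) :=
    antitoneOn_of_hasDerivWithinAt_nonpos (convex_Icc 0 1)
      (fun t _ => (hφ t).continuousAt.continuousWithinAt)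
      (fun t _ => (hφ t).hasDerivWithinAt) hφ_nonpos
  have h₁₀ : φ 1 ≤ φ 0 := hanti (by simp) (by simp) zero_le_one
  simp only [φ, zero_smul, add_zero, one_smul, zero_mul, sub_zero, one_mul, one_pow, ne_eq,
    OfNat.ofNat_ne_zero, not_false_eq_true, zero_pow, mul_zero] at h₁₀
  linarith

end Descent

section ConditionalExpectation

variable {Ω E : Type*} {m m₀ : MeasurableSpace Ω} {μ : Measure Ω}
  [NormedAddCommGroup E] [InnerProductSpace ℝ E]

theorem MeasureTheory.MemLp.integrable_inner {f g : Ω → E} (hf : MemLp f 2 μ) (hg : MemLp g 2 μ) :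
    Integrable (fun ω => ⟪f ω, g ω⟫) μ :=
  (L2.integrable_inner (𝕜 := ℝ) (hf.toLp f) (hg.toLp g)).congr <| by
    filter_upwards [hf.coeFn_toLp, hg.coeFn_toLp] with ω hfω hgω
    rw [hfω, hgω]

variable [CompleteSpace E] [IsFiniteMeasure μ]

theorem integral_inner_eq_integral_norm_sq_of_condExp_ae_eq (hm : m ≤ m₀) {g c : Ω → E}
    (hg : MemLp g 2 μ) (hc : μ[g|m] =ᵐ[μ] c) :
    ∫ ω, ⟪c ω, g ω⟫ ∂μ = ∫ ω, ‖c ω‖ ^ 2 ∂μ := by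
  set Y : Ω →₂[μ] E := (condExpL2 E ℝ hm (hg.toLp g) : Ω →₂[μ] E)
  have hY : (Y : Ω → E) =ᵐ[μ] c := (hg.condExpL2_ae_eq_condExp hm).trans hc
  calc ∫ ω, ⟪c ω, g ω⟫ ∂μ = ⟪Y, hg.toLp g⟫ := by
        rw [L2.inner_def]
        refine integral_congr_ae ?_
        filter_upwards [hY, hg.coeFn_toLp] with ω hYω hgω
        rw [hYω, hgω]
    _ = ⟪Y, Y⟫ := by
        rw [real_inner_comm, ← inner_condExpL2_eq_inner_fun hm (hg.toLp g) Y
          (lpMeas.aestronglyMeasurable _)]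
    _ = ∫ ω, ‖c ω‖ ^ 2 ∂μ := by
        rw [L2.inner_def]
        refine integral_congr_ae ?_
        filter_upwards [hY] with ω hYω
        rw [hYω, real_inner_self_eq_norm_sq]

theorem integral_norm_sq_eq_of_condExp_ae_eq (hm : m ≤ m₀) {g c : Ω → E}
    (hg : MemLp g 2 μ) (hc : μ[g|m] =ᵐ[μ] c) :
    ∫ ω, ‖g ω‖ ^ 2 ∂μ = ∫ ω, ‖g ω - c ω‖ ^ 2 ∂μ + ∫ ω, ‖c ω‖ ^ 2 ∂μ := by
  have hc2 : MemLp c 2 μ := (hg.condExp one_le_two).ae_eq hc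
  have hpt : ∀ ω, ‖g ω‖ ^ 2 = ‖g ω - c ω‖ ^ 2 + 2 * ⟪c ω, g ω⟫ - ‖c ω‖ ^ 2 := fun ω => by
    rw [norm_sub_sq_real, real_inner_comm]
    ring
  have hsub : Integrable (fun ω => ‖g ω - c ω‖ ^ 2) μ := (hg.sub hc2).integrable_norm_pow'
  have hinner : Integrable (fun ω => 2 * ⟪c ω, g ω⟫) μ := (hc2.integrable_inner hg).const_mul 2
  have hsum : Integrable (fun ω => ‖g ω - c ω‖ ^ 2 + 2 * ⟪c ω, g ω⟫) μ := hsub.add hinner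
  rw [integral_congr_ae (.of_forall hpt), integral_sub hsum hc2.integrable_norm_pow',
    integral_add hsub hinner, integral_const_mul,
    integral_inner_eq_integral_norm_sq_of_condExp_ae_eq hm hg hc]
  ring

theorem integral_le_of_ae_condExp_le [IsProbabilityMeasure μ] (hm : m ≤ m₀) {h : Ω → ℝ} {c : ℝ}
    (hc : ∀ᵐ ω ∂μ, (μ[h|m]) ω ≤ c) : ∫ ω, h ω ∂μ ≤ c := by
  rw [← integral_condExp hm]
  simpa using integral_mono_ae integrable_condExp (integrable_const c) hc

end ConditionalExpectation

section StochasticGradientStep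

variable {E : Type*} [NormedAddCommGroup E] [InnerProductSpace ℝ E] [CompleteSpace E]
  {f f' : E → ℝ} {L δ : ℝ}

theorem Differentiable.apply_sub_smul_le_of_abs_sub_le (hf : Differentiable ℝ f)
    (hlip : ∀ x y, ‖gradient f x - gradient f y‖ ≤ L * ‖x - y‖) (hdrift : ∀ x, |f' x - f x| ≤ δ)
    (x v : E) (η : ℝ) :
    f' (x - η • v) ≤ f x - η * ⟪gradient f x, v⟫ + L / 2 * η ^ 2 * ‖v‖ ^ 2 + δ := by
  have hdesc := hf.le_add_inner_gradient_add_sq hlip x (-(η • v))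
  rw [← sub_eq_add_neg, inner_neg_right, real_inner_smul_right,
    norm_neg, norm_smul, Real.norm_eq_abs, mul_pow, sq_abs] at hdesc
  linarith [(abs_le.1 (hdrift (x - η • v))).2]

theorem Differentiable.integral_apply_sub_smul_le_of_abs_sub_le {Ω : Type*} {m₀ : MeasurableSpace Ω}
    {μ : Measure Ω} [IsProbabilityMeasure μ] (hf : Differentiable ℝ f)
    (hlip : ∀ x y, ‖gradient f x - gradient f y‖ ≤ L * ‖x - y‖) (hdrift : ∀ x, |f' x - f x| ≤ δ)
    {θ g : Ω → E} (η : ℝ) (hg : MemLp g 2 μ) (hgrad : MemLp (fun ω => gradient f (θ ω)) 2 μ)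
    (hfθ : Integrable (fun ω => f (θ ω)) μ) (hf' : Integrable (fun ω => f' (θ ω - η • g ω)) μ) :
    ∫ ω, f' (θ ω - η • g ω) ∂μ ≤ ∫ ω, f (θ ω) ∂μ - η * ∫ ω, ⟪gradient f (θ ω), g ω⟫ ∂μ
      + L / 2 * η ^ 2 * ∫ ω, ‖g ω‖ ^ 2 ∂μ + δ := by
  have hinner : Integrable (fun ω => η * ⟪gradient f (θ ω), g ω⟫) μ :=
    (hgrad.integrable_inner hg).const_mul η
  have hsq : Integrable (fun ω => L / 2 * η ^ 2 * ‖g ω‖ ^ 2) μ :=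
    hg.integrable_norm_pow'.const_mul _
  have h₁ : Integrable (fun ω => f (θ ω) - η * ⟪gradient f (θ ω), g ω⟫) μ := hfθ.sub hinner
  have h₂ : Integrable (fun ω => f (θ ω) - η * ⟪gradient f (θ ω), g ω⟫
      + L / 2 * η ^ 2 * ‖g ω‖ ^ 2) μ := h₁.add hsq
  calc ∫ ω, f' (θ ω - η • g ω) ∂μ
      ≤ ∫ ω, (f (θ ω) - η * ⟪gradient f (θ ω), g ω⟫ + L / 2 * η ^ 2 * ‖g ω‖ ^ 2 + δ) ∂μ :=
        integral_mono hf' (h₂.add (integrable_const δ))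
          fun ω => hf.apply_sub_smul_le_of_abs_sub_le hlip hdrift (θ ω) (g ω) η
    _ = _ := by
        rw [integral_add h₂ (integrable_const δ), integral_add h₁ hsq, integral_sub hfθ hinner,
          integral_const_mul, integral_const_mul, integral_const, probReal_univ, one_smul]

end StochasticGradientStep

theorem stmt4_general {E : Type*} [NormedAddCommGroup E] [InnerProductSpace ℝ E]
    [FiniteDimensional ℝ E]
    {Ω : Type*} {mΩ : MeasurableSpace Ω} {μ : Measure Ω} [IsProbabilityMeasure μ]
    (𝒢 : MeasurableSpace Ω) (h𝒢 : 𝒢 ≤ mΩ)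
    (L σ δ η : ℝ) (hL : 0 < L)
    (f f' : E → ℝ) (hdiff : Differentiable ℝ f)
    (hlip : ∀ x y : E, ‖gradient f x - gradient f y‖ ≤ L * ‖x - y‖)
    (hdrift : ∀ x : E, |f' x - f x| ≤ δ)
    (θ g : Ω → E)
    (hg : MemLp g 2 μ)
    (hfθ : Integrable (fun ω => f (θ ω)) μ)
    (hf' : Integrable (fun ω => f' (θ ω - η • g ω)) μ)
    (hunbiased : μ[g|𝒢] =ᵐ[μ] fun ω => gradient f (θ ω))
    (hvar : ∀ᵐ ω ∂μ, (μ[fun ω' => ‖g ω' - gradient f (θ ω')‖ ^ 2|𝒢]) ω ≤ σ ^ 2) :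
    ∫ ω, f' (θ ω - η • g ω) ∂μ ≤
      (∫ ω, f (θ ω) ∂μ) - η * (1 - L * η) * (∫ ω, ‖gradient f (θ ω)‖ ^ 2 ∂μ)
        + L * η ^ 2 * σ ^ 2 + δ := by
  have hgrad : MemLp (fun ω => gradient f (θ ω)) 2 μ := (hg.condExp one_le_two).ae_eq hunbiased
  have hstep := hdiff.integral_apply_sub_smul_le_of_abs_sub_le hlip hdrift η hg hgrad hfθ hf'
  rw [integral_inner_eq_integral_norm_sq_of_condExp_ae_eq h𝒢 hg hunbiased,
    integral_norm_sq_eq_of_condExp_ae_eq h𝒢 hg hunbiased] at hstep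
  have hvar_le := integral_le_of_ae_condExp_le h𝒢 hvar
  have hgrad_nonneg : 0 ≤ ∫ ω, ‖gradient f (θ ω)‖ ^ 2 ∂μ :=
    integral_nonneg fun ω => sq_nonneg _
  have hvar_nonneg : 0 ≤ ∫ ω, ‖g ω - gradient f (θ ω)‖ ^ 2 ∂μ :=
    integral_nonneg fun ω => sq_nonneg _
  have hLη : 0 ≤ L * η ^ 2 := by positivity
  nlinarith [mul_nonneg hLη hgrad_nonneg, mul_nonneg hLη hvar_nonneg,
    mul_le_mul_of_nonneg_left hvar_le hLη]

/-- One-round recursion in the proof of Proposition 1: the expected value of the drifted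
objective f' at the updated iterate θ − η·g is controlled by the expected value of the
current objective f at θ, minus a gradient-norm decrease term, plus a variance term and
the drift δ. -/
theorem stmt4 {E : Type*} [NormedAddCommGroup E] [InnerProductSpace ℝ E]
    [FiniteDimensional ℝ E]
    {Ω : Type*} {mΩ : MeasurableSpace Ω} {μ : Measure Ω} [IsProbabilityMeasure μ]
    (𝒢 : MeasurableSpace Ω) (h𝒢 : 𝒢 ≤ mΩ)
    (L σ δ η : ℝ) (hL : 0 < L) (hσ : 0 ≤ σ) (hδ : 0 ≤ δ) (hη : 0 < η)
    (f f' : E → ℝ) (hdiff : Differentiable ℝ f)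
    (hlip : ∀ x y : E, ‖gradient f x - gradient f y‖ ≤ L * ‖x - y‖)
    (hdrift : ∀ x : E, |f' x - f x| ≤ δ)
    (θ g : Ω → E)
    (hθ : StronglyMeasurable[𝒢] θ)
    (hg : MemLp g 2 μ)
    (hfθ : Integrable (fun ω => f (θ ω)) μ)
    (hf' : Integrable (fun ω => f' (θ ω - η • g ω)) μ)
    (hunbiased : μ[g|𝒢] =ᵐ[μ] fun ω => gradient f (θ ω))
    (hvar : ∀ᵐ ω ∂μ, (μ[fun ω' => ‖g ω' - gradient f (θ ω')‖ ^ 2|𝒢]) ω ≤ σ ^ 2) :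
    ∫ ω, f' (θ ω - η • g ω) ∂μ ≤
      (∫ ω, f (θ ω) ∂μ) - η * (1 - L * η) * (∫ ω, ‖gradient f (θ ω)‖ ^ 2 ∂μ)
        + L * η ^ 2 * σ ^ 2 + δ :=
  stmt4_general 𝒢 h𝒢 L σ δ η hL f f' hdiff hlip hdrift θ g hg hfθ hf' hunbiased hvar
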